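/- The regular paperfolding word P contains abelian m-antipowers for every m ≥ 2: for every integer m ≥ 2, some factor of P is an abelian m-antipower. -/

import Mathlib

/-- The regular paperfolding word `P = P₁P₂⋯` over `{0,1}` (here `Bool`, with
`true` playing the role of `1`): `P_i = 1` iff
`i ≡ 3·2^{ν₂(i)} (mod 2^{ν₂(i)+2})`, where `ν₂` is the 2-adic valuation.
(The value at `i = 0` is irrelevant: factors only use positions `i ≥ 1`.) -/
def regularPF (i : ℕ) : Bool :=
  decide (i % 2 ^ (padicValNat 2 i + 2) = 3 * 2 ^ (padicValNat 2 i))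

/-- `v` is a factor of the infinite word `w = w₁w₂⋯` (indexed from 1):
`v = w_{ℓ+1} ⋯ w_{ℓ+n}` for some `ℓ ≥ 0`. -/
def IsFactor1 {A : Type*} (w : ℕ → A) (v : List A) : Prop :=
  ∃ ℓ : ℕ, v = (List.range v.length).map (fun j => w (ℓ + j + 1))

/-- The Parikh vector of a finite word: the number of occurrences of each letter. -/
def parikh {A : Type*} [DecidableEq A] (u : List A) : A → ℕ := fun a => u.count a

/-- An abelian `k`-antipower: a concatenation of `k` words of the same positive
length with pairwise distinct Parikh vectors. -/
def IsAbelianAntipower {A : Type*} [DecidableEq A] (k : ℕ) (v : List A) : Prop :=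
  ∃ us : List (List A), us.length = k ∧ us.flatten = v ∧
    (∃ d : ℕ, 0 < d ∧ ∀ u ∈ us, u.length = d) ∧
    us.Pairwise (fun u₁ u₂ => parikh u₁ ≠ parikh u₂)

def blk : ℕ → ℕ
  | 0 => 0
  | (n+1) => blk ((n+1)/2) + (if (n+1) % 2 = 1 ∧ ((n+1)/2) % 2 = 0 then 1 else 0)
decreasing_by omega

lemma blk_zero : blk 0 = 0 := by simp [blk]

lemma blk_one : blk 1 = 1 := by
  rw [show (1:ℕ) = 0+1 from rfl, blk]
  norm_num
  simp [blk]

lemma blk_two_mul (k : ℕ) : blk (2*k) = blk k := by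
  cases k with
  | zero => rfl
  | succ n =>
    rw [show 2*(n+1) = (2*n+1)+1 by ring, blk]
    have h1 : ((2*n+1)+1) % 2 = 0 := by omega
    have h2 : ((2*n+1)+1)/2 = n+1 := by omega
    rw [h2, if_neg (by omega)]
    simp

lemma blk_odd (k : ℕ) : blk (2*k+1) = blk k + (if k % 2 = 0 then 1 else 0) := by
  cases k with
  | zero => show blk 1 = _; rw [blk_one, blk_zero]; norm_num
  | succ n =>
    rw [show 2*(n+1)+1 = (2*n+2)+1 by ring, blk]
    have h2 : ((2*n+2)+1)/2 = n+1 := by omega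
    rw [h2]
    congr 1
    by_cases h : (n+1) % 2 = 0
    · rw [if_pos (by omega), if_pos h]
    · rw [if_neg (by omega), if_neg h]

lemma blk_pow (s : ℕ) : blk (2^s) = 1 := by
  induction s with
  | zero => exact blk_one
  | succ n ih => rw [pow_succ, mul_comm, blk_two_mul]; exact ih

def Nseq : ℕ → ℕ
  | 0 => 0
  | (s+1) => 4 * Nseq s + 1

lemma blk_Nseq (s : ℕ) : blk (Nseq s) = s := by
  induction s with
  | zero => exact blk_zero
  | succ n ih =>
    show blk (4 * Nseq n + 1) = n + 1
    rw [show 4 * Nseq n + 1 = 2*(2*Nseq n)+1 by ring, blk_odd, blk_two_mul, ih,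
      if_pos (by omega)]

lemma Nseq_ge (s : ℕ) : s ≤ Nseq s := by
  induction s with
  | zero => exact Nat.zero_le _
  | succ n ih => show n+1 ≤ 4 * Nseq n + 1; omega

lemma blk_step : ∀ z : ℕ, ((blk (z+1) : ℤ) - blk z ≤ 1 ∧ (-1 : ℤ) ≤ (blk (z+1) : ℤ) - blk z)
    ∧ (z % 2 = 0 → (0:ℤ) ≤ (blk (z+1) : ℤ) - blk z) := by
  intro z
  induction z using Nat.strong_induction_on with
  | _ z ih =>
    rcases Nat.even_or_odd z with ⟨k, hk⟩ | ⟨k, hk⟩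
    · -- z = 2k : blk(2k+1) - blk(2k) = if k even then 1 else 0
      subst hk
      have h1 : blk (k+k) = blk k := by rw [show k+k = 2*k by ring, blk_two_mul]
      have h2 : blk (k+k+1) = blk k + (if k % 2 = 0 then 1 else 0) := by
        rw [show k+k+1 = 2*k+1 by ring, blk_odd]
      rw [h2, h1]
      by_cases h : k % 2 = 0 <;> simp [h]
    · -- z = 2k+1
      subst hk
      have h1 : blk (2*k+1) = blk k + (if k % 2 = 0 then 1 else 0) := blk_odd k
      have h2 : blk (2*k+1+1) = blk (k+1) := by
        rw [show 2*k+1+1 = 2*(k+1) by ring, blk_two_mul]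
      have hklt : k < 2*k+1 := by omega
      have ihk := ih k hklt
      rw [h1, h2]
      constructor
      · by_cases h : k % 2 = 0
        · simp only [h, if_pos]
          have := ihk.2 h
          have := ihk.1.1
          constructor <;> push_cast <;> omega
        · simp only [h, if_neg, if_false]
          have := ihk.1.1
          have := ihk.1.2
          constructor <;> push_cast <;> omega
      · intro hcon; omega

lemma blk_step_le (z : ℕ) : (blk (z+1) : ℤ) - blk z ≤ 1 := (blk_step z).1.1
lemma blk_step_ge (z : ℕ) : (-1 : ℤ) ≤ (blk (z+1) : ℤ) - blk z := (blk_step z).1.2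

lemma blk_lip (a : ℕ) : ∀ c : ℕ, (blk (a+c) : ℤ) ≤ blk a + c ∧ (blk a : ℤ) ≤ blk (a+c) + c := by
  intro c
  induction c with
  | zero => simp
  | succ n ih =>
    have h1 := blk_step_le (a+n)
    have h2 := blk_step_ge (a+n)
    have e : a + (n+1) = (a+n) + 1 := by ring
    rw [e]
    push_cast
    constructor <;> [linarith [ih.1]; linarith [ih.2]]

lemma blk_sep : ∀ (E x y : ℕ), y < 2^E → blk (x * 2^(E+1) + y) = blk x + blk y := by
  intro E
  induction E with
  | zero =>
    intro x y hy
    interval_cases y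
    simp [pow_one, show x*2 = 2*x by ring, blk_two_mul, blk_zero]
  | succ n ih =>
    intro x y hy
    rcases Nat.even_or_odd y with ⟨y', hy'⟩ | ⟨y', hy'⟩
    · -- y = 2y'
      subst hy'
      have hy'lt : y' < 2^n := by
        have : (2:ℕ)^(n+1) = 2*2^n := by ring
        omega
      have e : x * 2^(n+1+1) + (y'+y') = 2 * (x * 2^(n+1) + y') := by ring
      rw [e, blk_two_mul, ih x y' hy'lt]
      congr 1
      rw [show y'+y' = 2*y' by ring, blk_two_mul]
    · subst hy'
      have hy'lt : y' < 2^n := by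
        have : (2:ℕ)^(n+1) = 2*2^n := by ring
        omega
      have e : x * 2^(n+1+1) + (2*y'+1) = 2 * (x * 2^(n+1) + y') + 1 := by ring
      rw [e, blk_odd, ih x y' hy'lt, blk_odd]
      have hpar : (x * 2^(n+1) + y') % 2 = y' % 2 := by
        have : (2:ℕ) ∣ x * 2^(n+1) := by
          exact Dvd.dvd.mul_left (dvd_pow_self 2 (by omega)) x
        omega
      rw [hpar]
      ring

lemma ceil_bounds (p T j : ℕ) (hp : 1 ≤ p) (hT : j ≤ T) :
    ∃ k, T ≤ j + k*p ∧ j + k*p ≤ T + (p-1) := by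
  refine ⟨(T - j + p - 1)/p, ?_, ?_⟩ <;>
  · have hdm := Nat.div_add_mod (T - j + p - 1) p
    have hmod := Nat.mod_lt (T - j + p - 1) (show 0 < p by omega)
    have hcm : ((T-j+p-1)/p) * p = p * ((T-j+p-1)/p) := Nat.mul_comm _ _
    omega

lemma sep_exists (j j' : ℕ) (h : j < j') :
    ∃ t : ℕ, (blk (t+j+1) : ℤ) - blk (t+j) ≠ (blk (t+j'+1) : ℤ) - blk (t+j') := by
  by_contra hcon
  push_neg at hcon
  set p := j' - j with hp
  have hp1 : 1 ≤ p := by omega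
  have hj' : j' = j + p := by omega
  have hstep : ∀ t, (blk (j+t+1):ℤ) - blk (j+t) = (blk (j+t+p+1):ℤ) - blk (j+t+p) := by
    intro t
    have := hcon t
    rw [hj'] at this
    have e1 : t + j = j + t := by ring
    have e2 : t + (j+p) = j + t + p := by ring
    rw [e1, e2] at this
    exact this
  have htel : ∀ t, (blk (j+t+p):ℤ) - blk (j+p) = (blk (j+t):ℤ) - blk j := by
    intro t
    induction t with
    | zero => simp
    | succ n ih =>
      have h1 := hstep n
      rw [show j + (n+1) + p = (j+n+p)+1 by omega, show j + (n+1) = (j+n)+1 by omega]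
      linarith
  have hgrid : ∀ k : ℕ, (blk (j + k*p) : ℤ) = blk j + k * ((blk (j+p):ℤ) - blk j) := by
    intro k
    induction k with
    | zero => simp
    | succ n ih =>
      have h1 := htel (n*p)
      have e1 : j + (n+1)*p = (j + n*p) + p := by ring
      have e2 : j + n * p + p = (j + n*p) + p := by ring
      rw [e1]
      rw [e2] at h1
      push_cast
      push_cast at ih h1
      linarith
  set S : ℤ := (blk (j+p):ℤ) - blk j with hS
  rcases lt_trichotomy S 0 with hSlt | hSeq | hSgt
  · -- S negative
    have hk := hgrid (blk j + 1)
    have hnn : (0:ℤ) ≤ (blk (j + (blk j + 1)*p) : ℤ) := by positivity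
    have hb : (0:ℤ) ≤ (blk j : ℤ) := by positivity
    have hSle : S ≤ -1 := by omega
    have hmul : ((blk j : ℤ)+1) * S ≤ ((blk j:ℤ)+1) * (-1) := by
      apply mul_le_mul_of_nonneg_left hSle
      positivity
    push_cast at hk
    linarith
  · -- S = 0
    set s : ℕ := blk j + p + 1 + j with hs
    have hN : blk (Nseq s) = s := blk_Nseq s
    have hNge : s ≤ Nseq s := Nseq_ge s
    set N := Nseq s with hNdef
    have hNj : j ≤ N := by omega
    obtain ⟨k, hb1, hb2⟩ := ceil_bounds p N j hp1 hNj
    have hgk := hgrid k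
    rw [hSeq] at hgk
    simp at hgk
    -- hgk : blk (j + k*p) = blk j  (as ℤ cast); convert to ℕ
    have hgkn : blk (j + k*p) = blk j := by exact_mod_cast hgk
    have hc : j + k*p = N + (j + k*p - N) := by omega
    have hlip := (blk_lip N (j + k*p - N)).2
    rw [← hc, hgkn, hN] at hlip
    have hsm : (j + k*p - N : ℕ) ≤ p - 1 := by omega
    have hcast : ((j + k*p - N : ℕ) : ℤ) ≤ (p:ℤ) - 1 := by
      omega
    omega
  · -- S positive
    set s : ℕ := j + p*p + p + 1 with hs
    have h2s : s < 2^s := Nat.lt_two_pow_self (n := s)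
    set N := 2^s with hNdef
    have hN : blk N = 1 := blk_pow s
    have hNj : j ≤ N := by omega
    obtain ⟨k, hb1, hb2⟩ := ceil_bounds p N j hp1 hNj
    have hDge : p*p + p + 2 ≤ N - j := by omega
    have hkge : p + 2 ≤ k := by
      by_contra hcon2
      push_neg at hcon2
      have hle : k * p ≤ (p+1) * p := by
        apply Nat.mul_le_mul_right
        omega
      have he : (p+1)*p = p*p + p := by ring
      rw [he] at hle
      omega
    have hgk := hgrid k
    have hSge : 1 ≤ S := by omega
    have hblkge : (k:ℤ) ≤ blk (j + k*p) := by
      have hb : (0:ℤ) ≤ (blk j : ℤ) := by positivity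
      have : (blk j : ℤ) + k * S ≥ k * 1 := by
        have hk0 : (0:ℤ) ≤ (k:ℤ) := by positivity
        nlinarith
      omega
    have hc : j + k*p = N + (j + k*p - N) := by omega
    have hlip := (blk_lip N (j + k*p - N)).1
    rw [← hc, hN] at hlip
    have hsmall : (j + k*p - N : ℕ) ≤ p - 1 := by omega
    have hcast : ((j + k*p - N : ℕ) : ℤ) ≤ (p:ℤ) - 1 := by
      omega
    omega


def F (n : ℕ) : ℕ := (List.range n).countP (fun k => regularPF (k+1))

lemma regularPF_two_mul (i : ℕ) (hi : i ≠ 0) : regularPF (2*i) = regularPF i := by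
  unfold regularPF
  have hv : padicValNat 2 (2*i) = padicValNat 2 i + 1 := by
    rw [padicValNat.mul (p := 2) (by norm_num) hi, padicValNat.self (by norm_num)]
    ring
  rw [hv]
  apply decide_eq_decide.mpr
  have e1 : (2:ℕ)^(padicValNat 2 i + 1 + 2) = 2 * 2^(padicValNat 2 i + 2) := by ring
  have e2 : 3 * (2:ℕ)^(padicValNat 2 i + 1) = 2 * (3 * 2^(padicValNat 2 i)) := by ring
  rw [e1, e2, Nat.mul_mod_mul_left]
  exact mul_right_inj' (by norm_num)

lemma regularPF_odd (i : ℕ) : regularPF (2*i+1) = decide (i % 2 = 1) := by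
  unfold regularPF
  have hv : padicValNat 2 (2*i+1) = 0 := padicValNat.eq_zero_of_not_dvd (by omega)
  rw [hv]
  apply decide_eq_decide.mpr
  norm_num
  omega

lemma F_succ (n : ℕ) : F (n+1) = F n + (if regularPF (n+1) then 1 else 0) := by
  unfold F
  rw [List.range_succ, List.countP_append]
  simp [List.countP_cons]

lemma F_two_mul : ∀ n, F (2*n) = F n + n/2 := by
  intro n
  induction n with
  | zero => rfl
  | succ n ih =>
    have e1 : 2*(n+1) = (2*n+1)+1 := by ring
    have e2 : 2*n+1 = (2*n)+1 := rfl
    rw [e1, F_succ, e2, F_succ, ih, F_succ]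
    rw [show (2*n)+1+1 = 2*(n+1) by ring, regularPF_two_mul (n+1) (by omega)]
    rw [show (2*n)+1 = 2*n+1 from rfl, regularPF_odd]
    by_cases h : n % 2 = 1
    · simp only [h, decide_eq_true_eq, if_pos]
      have : (n+1)/2 = n/2 + 1 := by omega
      omega
    · have : decide (n % 2 = 1) = false := by simp [h]
      rw [this]
      simp only [Bool.false_eq_true, if_false]
      have : (n+1)/2 = n/2 := by omega
      omega

lemma F_blk : ∀ z, F (2*z) + blk z = z := by
  intro z
  induction z using Nat.strong_induction_on with
  | _ z ih =>
    rcases Nat.even_or_odd z with ⟨k, hk⟩ | ⟨k, hk⟩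
    · rcases Nat.eq_zero_or_pos k with hk0 | hkpos
      · subst hk; subst hk0
        show F (2*(0+0)) + blk (0+0) = 0+0
        norm_num [blk_zero]
        rfl
      · subst hk
        have e : k + k = 2*k := by ring
        rw [e]
        have h1 : F (2*(2*k)) = F (2*k) + k := by
          rw [F_two_mul]
          congr 1
          omega
        rw [h1, blk_two_mul]
        have := ih k (by omega)
        omega
    · subst hk
      have h1 : F (2*(2*k+1)) = F (2*k+1) + k := by
        rw [F_two_mul]
        congr 1
        omega
      have h2 : F (2*k+1) = F (2*k) + (if regularPF (2*k+1) then 1 else 0) := F_succ (2*k)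
      have h3 : regularPF (2*k+1) = decide (k % 2 = 1) := regularPF_odd k
      have h4 : blk (2*k+1) = blk k + (if k % 2 = 0 then 1 else 0) := blk_odd k
      have h5 := ih k (by omega)
      rw [h1, h2, h3, h4]
      by_cases h : k % 2 = 1
      · have hd : decide (k % 2 = 1) = true := by simp [h]
        rw [hd, if_pos rfl, if_neg (by omega)]
        omega
      · have hd : decide (k % 2 = 1) = false := by simp [h]
        rw [hd]
        simp only [Bool.false_eq_true, if_false]
        rw [if_pos (by omega)]
        omega

lemma F_add (a c : ℕ) :
    F (a + c) = F a + (List.range c).countP (fun k => regularPF (a + k + 1)) := by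
  unfold F
  rw [List.range_add, List.countP_append, List.countP_map]
  congr 1

lemma digit_bound (x : ℕ → ℤ) (hx : ∀ i, x i ≤ 2 ∧ -2 ≤ x i) :
    ∀ n : ℕ, 2 * (∑ i ∈ Finset.range n, 5^i * x i) ≤ 5^n - 1 ∧
      -(5^n - 1) ≤ 2 * (∑ i ∈ Finset.range n, 5^i * x i) := by
  intro n
  induction n with
  | zero => simp
  | succ n ih =>
    rw [Finset.sum_range_succ]
    have h5 : (0:ℤ) ≤ 5^n := by positivity
    have h1 : 5^n * x n ≤ 5^n * 2 := mul_le_mul_of_nonneg_left (hx n).1 h5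
    have h2 : 5^n * (-2) ≤ 5^n * x n := mul_le_mul_of_nonneg_left (hx n).2 h5
    have e : (5:ℤ)^(n+1) = 5 * 5^n := by ring
    rw [e]
    constructor <;> linarith [ih.1, ih.2]

lemma digit_zero (x : ℕ → ℤ) (hx : ∀ i, x i ≤ 2 ∧ -2 ≤ x i) :
    ∀ n : ℕ, (∑ i ∈ Finset.range n, 5^i * x i) = 0 → ∀ i < n, x i = 0 := by
  intro n
  induction n with
  | zero => intro _ i hi; omega
  | succ n ih =>
    intro hsum i hi
    rw [Finset.sum_range_succ] at hsum
    have hb := digit_bound x hx n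
    have h5 : (0:ℤ) < 5^n := by positivity
    have hxn : x n = 0 := by
      rcases lt_trichotomy (x n) 0 with hlt | heq | hgt
      · have : x n ≤ -1 := by omega
        have : 5^n * x n ≤ 5^n * (-1) := mul_le_mul_of_nonneg_left this (le_of_lt h5)
        linarith [hb.1]
      · exact heq
      · have : (1:ℤ) ≤ x n := by omega
        have : 5^n * 1 ≤ 5^n * x n := mul_le_mul_of_nonneg_left this (le_of_lt h5)
        linarith [hb.2]
    rcases Nat.lt_succ_iff_lt_or_eq.mp hi with hlt | heq
    · apply ih _ _ hlt
      rw [hxn] at hsum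
      linarith
    · rw [heq]; exact hxn

def hvW (W : ℕ) : List ℕ → ℕ → ℕ
  | [], _ => 0
  | (t :: r), j => (t+j) + 2^(W+1) * hvW W r j

def dstep (W : ℕ) : List ℕ → ℕ
  | [] => 0
  | (_ :: r) => 1 + 2^(W+1) * dstep W r

lemma hvW_linear (W : ℕ) : ∀ (L : List ℕ) (j : ℕ), hvW W L j = hvW W L 0 + j * dstep W L := by
  intro L
  induction L with
  | nil => intro j; simp [hvW, dstep]
  | cons t r ih =>
    intro j
    show (t+j) + 2^(W+1) * hvW W r j = ((t+0) + 2^(W+1) * hvW W r 0) + j * (1 + 2^(W+1) * dstep W r)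
    rw [ih j]
    ring

lemma dstep_pos (W : ℕ) (t : ℕ) (r : List ℕ) : 0 < dstep W (t :: r) := by
  show 0 < 1 + 2^(W+1) * dstep W r
  omega

lemma blk_hvW (W : ℕ) (j : ℕ) : ∀ L : List ℕ, (∀ t ∈ L, t + j < 2^W) →
    blk (hvW W L j) = (L.map (fun t => blk (t+j))).sum := by
  intro L
  induction L with
  | nil => intro _; simp [hvW, blk_zero]
  | cons t r ih =>
    intro hb
    show blk ((t+j) + 2^(W+1) * hvW W r j) = _
    rw [add_comm, mul_comm]
    rw [blk_sep W _ _ (hb t (List.mem_cons_self (a := t) (l := r)))]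
    rw [List.map_cons, List.sum_cons, ih (fun u hu => hb u (List.mem_cons_of_mem t hu))]
    ring

def offList (tf : ℕ → ℕ) : ℕ → List ℕ
  | 0 => []
  | (i+1) => offList tf i ++ List.replicate (5^i) (tf i)

lemma offList_mem (tf : ℕ → ℕ) : ∀ n t, t ∈ offList tf n → ∃ i, i < n ∧ t = tf i := by
  intro n
  induction n with
  | zero => intro t ht; simp [offList] at ht
  | succ n ih =>
    intro t ht
    rw [offList, List.mem_append] at ht
    rcases ht with h | h
    · obtain ⟨i, hi, he⟩ := ih t h
      exact ⟨i, by omega, he⟩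
    · rw [List.mem_replicate] at h
      exact ⟨n, by omega, h.2⟩

lemma offList_ne_nil (tf : ℕ → ℕ) (n : ℕ) (hn : 1 ≤ n) : offList tf n ≠ [] := by
  cases n with
  | zero => omega
  | succ n =>
    rw [offList]
    intro h
    rcases List.append_eq_nil_iff.mp h with ⟨_, h2⟩
    have h5 : (5:ℕ)^n ≠ 0 := by positivity
    rw [List.replicate_eq_nil_iff] at h2
    exact h5 h2

lemma offList_sum (tf : ℕ → ℕ) (g : ℕ → ℕ) :
    ∀ n, ((offList tf n).map (fun t => g t)).sum = ∑ i ∈ Finset.range n, 5^i * g (tf i) := by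
  intro n
  induction n with
  | zero => simp [offList]
  | succ n ih =>
    rw [offList, List.map_append, List.sum_append, ih, List.map_replicate,
      List.sum_replicate, Finset.sum_range_succ, smul_eq_mul]

lemma flatten_chunks (g : ℕ → Bool) (dd : ℕ) :
    ∀ mm, ((List.range mm).map (fun j => (List.range dd).map (fun k => g (j*dd + k)))).flatten
      = (List.range (mm*dd)).map g := by
  intro mm
  induction mm with
  | zero => simp
  | succ mm ih =>
    rw [List.range_succ, List.map_append, List.flatten_append, ih]
    rw [show (mm+1)*dd = mm*dd + dd by ring, List.range_add, List.map_append, List.map_map]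
    simp only [List.map_cons, List.map_nil, List.flatten_cons, List.flatten_nil,
      List.append_nil]
    rfl

lemma pl_prop (m : ℕ) :
    ∀ pr ∈ (List.range m).flatMap (fun b => (List.range b).map (fun a => ((a : ℕ), b))),
      pr.1 < pr.2 ∧ pr.2 < m := by
  intro pr hpr
  rw [List.mem_flatMap] at hpr
  obtain ⟨b, hb, hpr⟩ := hpr
  rw [List.mem_map] at hpr
  obtain ⟨a, ha, he⟩ := hpr
  rw [List.mem_range] at hb ha
  rw [← he]
  exact ⟨ha, hb⟩

lemma pl_mem (m a b : ℕ) (hab : a < b) (hbm : b < m) :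
    (a, b) ∈ (List.range m).flatMap (fun b => (List.range b).map (fun a => ((a : ℕ), b))) := by
  rw [List.mem_flatMap]
  exact ⟨b, List.mem_range.mpr hbm, List.mem_map.mpr ⟨a, List.mem_range.mpr hab, rfl⟩⟩

noncomputable def Tsep : ℕ → ℕ → ℕ := fun a b =>
  if h : a < b then Classical.choose (sep_exists a b h) else 0

lemma Tsep_spec (a b : ℕ) (h : a < b) :
    (blk (Tsep a b + a + 1) : ℤ) - blk (Tsep a b + a) ≠
      (blk (Tsep a b + b + 1) : ℤ) - blk (Tsep a b + b) := by
  unfold Tsep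
  rw [dif_pos h]
  exact Classical.choose_spec (sep_exists a b h)




/-- The regular paperfolding word contains abelian `m`-antipowers for every `m ≥ 2`. -/
theorem regularPF_contains_abelian_antipowers :
    ∀ m : ℕ, 2 ≤ m →
      ∃ v : List Bool, IsFactor1 regularPF v ∧ IsAbelianAntipower m v := by
  intro m hm
  classical
  set pl : List (ℕ × ℕ) :=
    (List.range m).flatMap (fun b => (List.range b).map (fun a => ((a : ℕ), b))) with hpl
  set π : ℕ := pl.length with hπ
  set tf : ℕ → ℕ := fun i => if h : i < pl.length then Tsep (pl[i]'h).1 (pl[i]'h).2 else 0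
    with htf
  set TM : ℕ := (Finset.range π).sup tf with hTM
  set W : ℕ := TM + m + 2 with hW
  set L : List ℕ := offList tf π with hL
  set l : ℕ := 2 * hvW W L 0 with hl
  set ds : ℕ := dstep W L with hds
  set d : ℕ := 2 * ds with hd
  have hπpos : 1 ≤ π := by
    have hmem := pl_mem m 0 1 (by omega) (by omega)
    exact List.length_pos_iff.mpr (List.ne_nil_of_mem hmem)
  have hLne : L ≠ [] := offList_ne_nil tf π hπpos
  have hdspos : 0 < ds := by
    rcases hLc : L with _ | ⟨t, r⟩
    · exact absurd hLc hLne
    · rw [hds, hLc]; exact dstep_pos W t r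
  have hdpos : 0 < d := by rw [hd]; omega
  have hbnd : ∀ j, j ≤ m → ∀ t ∈ L, t + j < 2^W := by
    intro j hj t ht
    obtain ⟨i, hi, he⟩ := offList_mem tf π t ht
    have h1 : tf i ≤ TM := Finset.le_sup (Finset.mem_range.mpr hi)
    have h2 : W < 2^W := Nat.lt_two_pow_self (n := W)
    omega
  have hFq : ∀ q, q ≤ m →
      F (2 * hvW W L q) + ∑ i ∈ Finset.range π, 5^i * blk (tf i + q) = hvW W L q := by
    intro q hq
    have h1 := F_blk (hvW W L q)
    have h2 := blk_hvW W q L (hbnd q hq)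
    have h3 := offList_sum tf (fun t => blk (t + q)) π
    rw [← hL] at h3
    rw [h2, h3] at h1
    exact h1
  have hlin : ∀ j : ℕ, l + j * d = 2 * hvW W L j := by
    intro j
    rw [hvW_linear W L j, hl, hd, hds]
    ring
  have hstep : ∀ j : ℕ, hvW W L (j+1) = hvW W L j + ds := by
    intro j
    rw [hvW_linear W L (j+1), hvW_linear W L j, hds]
    ring
  set cnt : ℕ → ℕ := fun j => (List.range d).countP (fun k => regularPF (l + j*d + k + 1))
    with hcnt
  have hFadd : ∀ j : ℕ, F (l + j*d) + cnt j = F (l + j*d + d) := by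
    intro j
    rw [hcnt]
    dsimp only
    rw [F_add (l + j*d) d]
  have hdist : ∀ j j', j < j' → j' < m → cnt j ≠ cnt j' := by
    intro j j' hjj' hj'm heq
    have hq1 := hFq j (by omega)
    have hq2 := hFq (j+1) (by omega)
    have hq3 := hFq j' (by omega)
    have hq4 := hFq (j'+1) (by omega)
    have hs1 := hstep j
    have hs2 := hstep j'
    have hc1 := hFadd j
    have hc2 := hFadd j'
    have he1 : l + j*d + d = l + (j+1)*d := by ring
    have he2 : l + j'*d + d = l + (j'+1)*d := by ring
    rw [he1, hlin (j+1)] at hc1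
    rw [he2, hlin (j'+1)] at hc2
    rw [hlin j] at hc1
    rw [hlin j'] at hc2
    -- abbreviate sums
    set B0 : ℕ := ∑ i ∈ Finset.range π, 5^i * blk (tf i + j) with hB0
    set B1 : ℕ := ∑ i ∈ Finset.range π, 5^i * blk (tf i + (j+1)) with hB1
    set B2 : ℕ := ∑ i ∈ Finset.range π, 5^i * blk (tf i + j') with hB2
    set B3 : ℕ := ∑ i ∈ Finset.range π, 5^i * blk (tf i + (j'+1)) with hB3
    have hkey : B1 + B2 = B3 + B0 := by omega
    -- cast to ℤ and apply digit argument
    set x : ℕ → ℤ := fun i =>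
      ((blk (tf i + j + 1) : ℤ) - blk (tf i + j)) -
        ((blk (tf i + j' + 1) : ℤ) - blk (tf i + j')) with hx
    have hxb : ∀ i, x i ≤ 2 ∧ -2 ≤ x i := by
      intro i
      have a1 := blk_step_le (tf i + j)
      have a2 := blk_step_ge (tf i + j)
      have a3 := blk_step_le (tf i + j')
      have a4 := blk_step_ge (tf i + j')
      rw [hx]
      constructor <;> dsimp only <;> [linarith; linarith]
    have hsum0 : (∑ i ∈ Finset.range π, 5^i * x i) = 0 := by
      have hcast := congrArg (fun n : ℕ => (n : ℤ)) hkey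
      push_cast at hcast
      rw [hB1, hB2, hB3, hB0] at hcast
      push_cast at hcast
      have expand : (∑ i ∈ Finset.range π, 5^i * x i) =
          (∑ i ∈ Finset.range π, (5:ℤ)^i * blk (tf i + (j+1)))
          - (∑ i ∈ Finset.range π, (5:ℤ)^i * blk (tf i + j))
          - (∑ i ∈ Finset.range π, (5:ℤ)^i * blk (tf i + (j'+1)))
          + (∑ i ∈ Finset.range π, (5:ℤ)^i * blk (tf i + j')) := by
        rw [← Finset.sum_sub_distrib, ← Finset.sum_sub_distrib, ← Finset.sum_add_distrib]
        apply Finset.sum_congr rfl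
        intro i _
        rw [hx]
        have e1 : tf i + (j+1) = tf i + j + 1 := by ring
        have e2 : tf i + (j'+1) = tf i + j' + 1 := by ring
        rw [e1, e2]
        ring
      rw [expand]
      linarith
    obtain ⟨i₀, hi₀, hple⟩ := List.mem_iff_getElem.mp (pl_mem m j j' hjj' hj'm)
    have hzero := digit_zero x hxb π hsum0 i₀ (by rw [hπ]; exact hi₀)
    have htfi : tf i₀ = Tsep j j' := by
      rw [htf]
      dsimp only
      rw [dif_pos hi₀, hple]
    have hTspec := Tsep_spec j j' hjj'
    rw [← htfi] at hTspec
    rw [hx] at hzero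
    dsimp only at hzero
    apply hTspec
    linarith
  -- build the witness
  refine ⟨(List.range (m*d)).map (fun k => regularPF (l + k + 1)), ?_, ?_⟩
  · refine ⟨l, ?_⟩
    rw [List.length_map, List.length_range]
  · refine ⟨(List.range m).map (fun j =>
      (List.range d).map (fun k => regularPF (l + (j*d + k) + 1))), ?_, ?_, ⟨d, hdpos, ?_⟩, ?_⟩
    · rw [List.length_map, List.length_range]
    · exact flatten_chunks (fun k => regularPF (l + k + 1)) d m
    · intro u hu
      rw [List.mem_map] at hu
      obtain ⟨j, _, he⟩ := hu
      rw [← he, List.length_map, List.length_range]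
    · rw [List.pairwise_map]
      rw [List.pairwise_iff_getElem]
      intro a b ha hb hab
      rw [List.length_range] at ha hb
      rw [List.getElem_range, List.getElem_range]
      intro hpar
      have hcount := congrFun hpar true
      have hcnta : ∀ j : ℕ, parikh ((List.range d).map
          (fun k => regularPF (l + (j*d + k) + 1))) true = cnt j := by
        intro j
        show ((List.range d).map (fun k => regularPF (l + (j*d + k) + 1))).count true = cnt j
        rw [List.count_eq_countP, List.countP_map, hcnt]
        dsimp only
        apply List.countP_congr
        intro k _
        show ((· == true) (regularPF (l + (j*d + k) + 1)) = true) ↔ _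
        have e : l + (j*d + k) + 1 = l + j*d + k + 1 := by omega
        rw [e]
        simp
      rw [hcnta a, hcnta b] at hcount
      exact hdist a b hab hb hcount
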